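/- arXiv:2505.14641 — 3 statements merged into one kernel-verified Lean document; each statement's English description precedes it below -/
import Mathlib

section
/- For every even natural number q ≥ 4 there exists a subset U of the vertices of the Hamming graph H(3,q) with |U| = 5q²/4 such that the VC-dimension of (U, n(U)) is exactly 1. -/
/-!
Take `q = 2m`. Let `U` consist of the plane `z = x + y` together with the `m²` points of the
shifted plane `z = x + y + m` whose first two coordinates lie in `{0, …, m - 1}`. Both pieces
are independent sets, a point `(a, b, a + b + m)` of the second one has exactly the three
neighbours `(a, b)`, `(a + m, b)`, `(a, b + m)` (first two coordinates) in the plane, and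
because `{0, …, m - 1}` and its translate by `m` are disjoint, no two shifted points share a
neighbour. So `U` induces a disjoint union of stars, and in a star forest no two vertices
`w₁ ≠ w₂` are shattered: a common neighbour of both is the only neighbour of `w₁`.
-/

/-- Two vertices of the Hamming graph `H(d,q,t)` (vertex set `(ZMod q)^d`) are adjacent
if and only if they differ in exactly `t` coordinates. -/
def hammingAdj {d q : ℕ} (t : ℕ) (x y : Fin d → ZMod q) : Prop :=
  (Finset.univ.filter fun i => x i ≠ y i).card = t

/-- `W ⊆ U` is shattered by the neighborhoods `n(U)`: for every `S ⊆ W` there is a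
vertex `u ∈ U` with `n(u) ∩ W = S`. -/
def Shatters {d q : ℕ} (t : ℕ) (U W : Finset (Fin d → ZMod q)) : Prop :=
  ∀ S ⊆ W, ∃ u ∈ U, ∀ w ∈ W, (w ∈ S ↔ hammingAdj t u w)

/-- Equivalently: the graph induced on `U` is a disjoint union of stars. -/
def IsStarForest {d q : ℕ} (t : ℕ) (U : Finset (Fin d → ZMod q)) : Prop :=
  ∀ u ∈ U, ∀ v ∈ U, ∀ w₁ ∈ U, ∀ w₂ ∈ U, w₁ ≠ w₂ →
    hammingAdj t u w₁ → hammingAdj t u w₂ → hammingAdj t v w₁ → v = u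

section Shattering

variable {d q t : ℕ}

theorem hammingAdj_comm {x y : Fin d → ZMod q} : hammingAdj t x y ↔ hammingAdj t y x := by
  simp only [hammingAdj, ne_comm]

theorem not_hammingAdj_self (ht : t ≠ 0) (x : Fin d → ZMod q) : ¬hammingAdj t x x := by
  simpa [hammingAdj] using ht.symm

theorem shatters_singleton {U : Finset (Fin d → ZMod q)} {u w : Fin d → ZMod q}
    (hu : u ∈ U) (hw : w ∈ U) (ht : t ≠ 0) (huw : hammingAdj t u w) : Shatters t U {w} := by
  intro S hS
  rcases Finset.subset_singleton_iff.mp hS with rfl | rfl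
  · exact ⟨w, hw, by simp [not_hammingAdj_self ht]⟩
  · exact ⟨u, hu, by simp [huw]⟩

theorem IsStarForest.card_le_one_of_shatters {U W : Finset (Fin d → ZMod q)}
    (hU : IsStarForest t U) (hW : W ⊆ U) (hsh : Shatters t U W) : W.card ≤ 1 := by
  by_contra! hcard
  obtain ⟨w₁, hw₁, w₂, hw₂, hne⟩ := Finset.one_lt_card.mp hcard
  obtain ⟨u, hu, hu_adj⟩ :=
    hsh {w₁, w₂} (Finset.insert_subset hw₁ (Finset.singleton_subset_iff.mpr hw₂))
  obtain ⟨v, hv, hv_adj⟩ := hsh {w₁} (Finset.singleton_subset_iff.mpr hw₁)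
  have huw₂ : hammingAdj t u w₂ := (hu_adj w₂ hw₂).mp (by simp)
  have hvu : v = u := hU u hu v hv w₁ (hW hw₁) w₂ (hW hw₂) hne
    ((hu_adj w₁ hw₁).mp (by simp)) huw₂ ((hv_adj w₁ hw₁).mp (by simp))
  subst hvu
  exact hne (Finset.mem_singleton.mp ((hv_adj w₂ hw₂).mpr huw₂)).symm

end Shattering

theorem hammingAdj_one_iff {q : ℕ} {x y : Fin 3 → ZMod q} :
    hammingAdj 1 x y ↔ (x 0 ≠ y 0 ∧ x 1 = y 1 ∧ x 2 = y 2) ∨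
      (x 0 = y 0 ∧ x 1 ≠ y 1 ∧ x 2 = y 2) ∨ (x 0 = y 0 ∧ x 1 = y 1 ∧ x 2 ≠ y 2) := by
  rw [hammingAdj, show (Finset.univ : Finset (Fin 3)) = {0, 1, 2} from rfl]
  by_cases h0 : x 0 = y 0 <;> by_cases h1 : x 1 = y 1 <;> by_cases h2 : x 2 = y 2 <;>
    simp [Finset.filter_insert, Finset.filter_singleton, h0, h1, h2]

section StackedPlanes

variable {q : ℕ}

def planePt (c : ZMod q) (p : ZMod q × ZMod q) : Fin 3 → ZMod q :=
  ![p.1, p.2, p.1 + p.2 + c]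

theorem planePt_inj {c c' : ZMod q} {p p' : ZMod q × ZMod q} :
    planePt c p = planePt c' p' ↔ c = c' ∧ p = p' := by
  obtain ⟨a, b⟩ := p
  obtain ⟨a', b'⟩ := p'
  simp only [planePt, Matrix.vecCons_inj, Prod.mk.injEq, and_true]
  grind

theorem hammingAdj_planePt_iff {c c' : ZMod q} {p p' : ZMod q × ZMod q} :
    hammingAdj 1 (planePt c p) (planePt c' p') ↔
      c ≠ c' ∧ (p' = p ∨ p' = p + (c - c', 0) ∨ p' = p + (0, c - c')) := by
  obtain ⟨a, b⟩ := p
  obtain ⟨a', b'⟩ := p'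
  simp only [hammingAdj_one_iff, planePt, Matrix.cons_val, Prod.mk.injEq, Prod.mk_add_mk,
    add_zero]
  grind

theorem eq_of_hammingAdj_planePt {c : ZMod q} {L : Finset (ZMod q)}
    (hL : ∀ s ∈ L, ∀ s' ∈ L, s ≠ s' + c) {p p' r : ZMod q × ZMod q}
    (hp : p ∈ L ×ˢ L) (hp' : p' ∈ L ×ˢ L)
    (h : hammingAdj 1 (planePt c p) (planePt 0 r))
    (h' : hammingAdj 1 (planePt c p') (planePt 0 r)) : p = p' := by
  obtain ⟨a, b⟩ := p
  obtain ⟨a', b'⟩ := p'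
  obtain ⟨x, y⟩ := r
  rw [Finset.mem_product] at hp hp'
  simp only [hammingAdj_planePt_iff, sub_zero, Prod.mk.injEq, Prod.mk_add_mk, add_zero]
    at h h' ⊢
  have := hL a hp.1 a' hp'.1
  have := hL a' hp'.1 a hp.1
  have := hL b hp.2 b' hp'.2
  have := hL b' hp'.2 b hp.2
  clear hL hp hp'
  grind

variable [NeZero q]

def stackedPlanes (c : ZMod q) (L : Finset (ZMod q)) : Finset (Fin 3 → ZMod q) :=
  Finset.univ.image (planePt 0) ∪ (L ×ˢ L).image (planePt c)

variable {c : ZMod q} {L : Finset (ZMod q)}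

theorem mem_stackedPlanes {v : Fin 3 → ZMod q} :
    v ∈ stackedPlanes c L ↔ (∃ r, planePt 0 r = v) ∨ ∃ p ∈ L ×ˢ L, planePt c p = v := by
  simp only [stackedPlanes, Finset.mem_union, Finset.mem_image, Finset.mem_univ, true_and]

theorem card_stackedPlanes (hc : c ≠ 0) : (stackedPlanes c L).card = q ^ 2 + L.card ^ 2 := by
  have hinj : ∀ e : ZMod q, Function.Injective (planePt e) :=
    fun _ _ _ h => (planePt_inj.mp h).2
  have hdisj : Disjoint (Finset.univ.image (planePt 0)) ((L ×ˢ L).image (planePt c)) := by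
    simp only [Finset.disjoint_left, Finset.mem_image, not_exists, not_and]
    rintro _ ⟨r, -, rfl⟩ p - h
    exact hc (planePt_inj.mp h).1
  rw [stackedPlanes, Finset.card_union_of_disjoint hdisj,
    Finset.card_image_of_injective _ (hinj 0), Finset.card_image_of_injective _ (hinj c),
    Finset.card_univ, Fintype.card_prod, ZMod.card, Finset.card_product]
  ring

theorem isStarForest_stackedPlanes (hL : ∀ s ∈ L, ∀ s' ∈ L, s ≠ s' + c) :
    IsStarForest 1 (stackedPlanes c L) := by
  have not_adj : ∀ (e : ZMod q) p p', ¬hammingAdj 1 (planePt e p) (planePt e p') :=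
    fun _ _ _ h => (hammingAdj_planePt_iff.mp h).1 rfl
  intro u hu v hv w₁ hw₁ w₂ hw₂ hne huw₁ huw₂ hvw₁
  rw [mem_stackedPlanes] at hu hv hw₁ hw₂
  rcases hu with ⟨r, rfl⟩ | ⟨p, hp, rfl⟩
  · obtain ⟨p₁, hp₁, rfl⟩ :=
      hw₁.resolve_left (by rintro ⟨_, rfl⟩; exact not_adj _ _ _ huw₁)
    obtain ⟨p₂, hp₂, rfl⟩ :=
      hw₂.resolve_left (by rintro ⟨_, rfl⟩; exact not_adj _ _ _ huw₂)
    exact absurd (congrArg (planePt c) (eq_of_hammingAdj_planePt hL hp₁ hp₂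
      (hammingAdj_comm.mp huw₁) (hammingAdj_comm.mp huw₂))) hne
  · obtain ⟨r, rfl⟩ :=
      hw₁.resolve_right (by rintro ⟨_, _, rfl⟩; exact not_adj _ _ _ huw₁)
    obtain ⟨p', hp', rfl⟩ :=
      hv.resolve_left (by rintro ⟨_, rfl⟩; exact not_adj _ _ _ hvw₁)
    rw [eq_of_hammingAdj_planePt hL hp' hp hvw₁ huw₁]

end StackedPlanes

theorem card_image_natCast_range {q m : ℕ} (hm : m ≤ q) :
    ((Finset.range m).image (Nat.cast : ℕ → ZMod q)).card = m := by
  rw [Finset.card_image_of_injOn, Finset.card_range]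
  intro i hi j hj h
  rw [Finset.coe_range, Set.mem_Iio] at hi hj
  rwa [ZMod.natCast_eq_natCast_iff', Nat.mod_eq_of_lt (by omega),
    Nat.mod_eq_of_lt (by omega)] at h

theorem natCast_ne_natCast_add {q m i j : ℕ} (hi : i < m) (hj : j + m < q) :
    (i : ZMod q) ≠ j + m := by
  rw [← Nat.cast_add, ne_eq, ZMod.natCast_eq_natCast_iff', Nat.mod_eq_of_lt (by omega),
    Nat.mod_eq_of_lt hj]
  omega

/-- for every even `q ≥ 4` there is `U ⊆ V(H(3,q))` with `|U| = 5q²/4`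
whose VC-dimension is exactly 1. -/
theorem exists_vc_dim_one_H3q (q : ℕ) (hq : 4 ≤ q) (heven : Even q) :
    ∃ U : Finset (Fin 3 → ZMod q),
      4 * U.card = 5 * q ^ 2 ∧
      (∃ W ⊆ U, W.card = 1 ∧ Shatters 1 U W) ∧
      (∀ W ⊆ U, Shatters 1 U W → W.card ≤ 1) := by
  obtain ⟨m, rfl⟩ := heven
  have : NeZero (m + m) := ⟨by omega⟩
  set L : Finset (ZMod (m + m)) := (Finset.range m).image Nat.cast
  have hL : ∀ s ∈ L, ∀ s' ∈ L, s ≠ s' + m := by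
    simp only [L, Finset.mem_image, Finset.mem_range]
    rintro _ ⟨i, hi, rfl⟩ _ ⟨j, hj, rfl⟩
    exact natCast_ne_natCast_add hi (by omega)
  have h0 : (0 : ZMod (m + m)) ∈ L :=
    Finset.mem_image.mpr ⟨0, Finset.mem_range.mpr (by omega), Nat.cast_zero⟩
  have hm : (m : ZMod (m + m)) ≠ 0 := fun h => hL 0 h0 0 h0 (by rw [h, add_zero])
  refine ⟨stackedPlanes (m : ZMod (m + m)) L, ?_, ?_,
    fun W hW hsh => (isStarForest_stackedPlanes hL).card_le_one_of_shatters hW hsh⟩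
  · rw [card_stackedPlanes hm, card_image_natCast_range (by omega)]
    ring
  · have hw : planePt 0 (0, 0) ∈ stackedPlanes (m : ZMod (m + m)) L :=
      mem_stackedPlanes.mpr (Or.inl ⟨_, rfl⟩)
    have hu : planePt m (0, 0) ∈ stackedPlanes (m : ZMod (m + m)) L :=
      mem_stackedPlanes.mpr (Or.inr ⟨_, Finset.mk_mem_product h0 h0, rfl⟩)
    exact ⟨{planePt 0 (0, 0)}, Finset.singleton_subset_iff.mpr hw, Finset.card_singleton _,
      shatters_singleton hu hw one_ne_zero (hammingAdj_planePt_iff.mpr ⟨hm, Or.inl rfl⟩)⟩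
end

section
/- For every natural number q ≥ 3 there exists a subset U of the vertices of the Hamming graph H(2,q,2) with |U| = 2q − 1 such that the VC-dimension of (U, n(U)) is strictly less than 2. One such set is the set of vertices with at least one coordinate equal to 0. -/
lemma hammingAdj_iff_forall_ne {d q : ℕ} {u w : Fin d → ZMod q} :
    hammingAdj d u w ↔ ∀ i, u i ≠ w i := by
  unfold hammingAdj
  simpa only [Finset.card_univ, Fintype.card_fin, Finset.mem_univ, true_implies] using
    Finset.card_filter_eq_iff (s := Finset.univ) (p := fun i => u i ≠ w i)

lemma Shatters.mono {d q t : ℕ} {U W W' : Finset (Fin d → ZMod q)} (h : Shatters t U W)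
    (hW' : W' ⊆ W) : Shatters t U W' := fun S hS =>
  let ⟨u, hu, huS⟩ := h S (hS.trans hW')
  ⟨u, hu, fun w hw => huS w (hW' hw)⟩

lemma Fin.eq_rev_of_ne {i k : Fin 2} (h : k ≠ i) : k = i.rev := by
  fin_cases i <;> fin_cases k <;> simp_all

lemma Fin.forall_fin_two_rev {P : Fin 2 → Prop} (i : Fin 2) : (∀ k, P k) ↔ P i ∧ P i.rev := by
  fin_cases i <;> simp [Fin.forall_fin_two, and_comm]

def coordHyperplanes (d q : ℕ) [NeZero q] : Finset (Fin d → ZMod q) :=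
  Finset.univ.filter fun x => ∃ i, x i = 0

section

variable {d q : ℕ} [NeZero q]

lemma mem_coordHyperplanes {x : Fin d → ZMod q} :
    x ∈ coordHyperplanes d q ↔ ∃ i, x i = 0 := by
  simp [coordHyperplanes]

lemma card_coordHyperplanes : (coordHyperplanes d q).card = q ^ d - (q - 1) ^ d := by
  have hcompl : Finset.univ.filter (fun x : Fin d → ZMod q => ¬∃ i, x i = 0) =
      Fintype.piFinset fun _ => {0}ᶜ := by
    ext x
    simp
  have hsplit := Finset.card_filter_add_card_filter_not (s := Finset.univ)
    fun x : Fin d → ZMod q => ∃ i, x i = 0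
  rw [hcompl, Fintype.card_piFinset, Finset.card_univ, Fintype.card_fun, ZMod.card,
    Fintype.card_fin, Finset.prod_const, Finset.card_compl, Finset.card_singleton, ZMod.card,
    Finset.card_univ, Fintype.card_fin] at hsplit
  rw [coordHyperplanes]
  omega

end

section

variable {q : ℕ} [NeZero q]

local notation "C" => coordHyperplanes 2 q

lemma rev_eq_zero_of_mem_coordHyperplanes {x : Fin 2 → ZMod q} (hx : x ∈ C) {i : Fin 2}
    (hi : x i ≠ 0) : x i.rev = 0 := by
  obtain ⟨k, hk⟩ := mem_coordHyperplanes.1 hx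
  rwa [← Fin.eq_rev_of_ne (ne_of_apply_ne x (hk ▸ hi.symm))]

lemma hammingAdj_iff_of_mem_axis {v w : Fin 2 → ZMod q} (hv : v ∈ C) {i : Fin 2}
    (hwi : w i ≠ 0) (hw : w i.rev = 0) : hammingAdj 2 v w ↔ v i = 0 ∧ v i.rev ≠ 0 := by
  rw [hammingAdj_iff_forall_ne, Fin.forall_fin_two_rev i, hw]
  constructor
  · rintro ⟨-, hrev⟩
    exact ⟨by simpa using rev_eq_zero_of_mem_coordHyperplanes hv (i := i.rev) hrev, hrev⟩
  · rintro ⟨hvi, hrev⟩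
    exact ⟨hvi ▸ hwi.symm, hrev⟩

lemma mem_axis_of_hammingAdj {u w : Fin 2 → ZMod q} (hw : w ∈ C) {i : Fin 2} (hui : u i = 0)
    (h : hammingAdj 2 u w) : w i ≠ 0 ∧ w i.rev = 0 := by
  have hwi : w i ≠ 0 := hui ▸ (hammingAdj_iff_forall_ne.1 h i).symm
  exact ⟨hwi, rev_eq_zero_of_mem_coordHyperplanes hw hwi⟩

lemma not_shatters_pair {w₁ w₂ : Fin 2 → ZMod q} (h₁ : w₁ ∈ C) (h₂ : w₂ ∈ C) (hne : w₁ ≠ w₂) :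
    ¬Shatters 2 C {w₁, w₂} := by
  intro hsh
  obtain ⟨u, hu, hu_adj⟩ := hsh {w₁, w₂} Finset.Subset.rfl
  obtain ⟨i, hui⟩ := mem_coordHyperplanes.1 hu
  obtain ⟨h₁i, h₁rev⟩ := mem_axis_of_hammingAdj h₁ hui ((hu_adj w₁ (by simp)).1 (by simp))
  obtain ⟨h₂i, h₂rev⟩ := mem_axis_of_hammingAdj h₂ hui ((hu_adj w₂ (by simp)).1 (by simp))
  obtain ⟨v, hv, hv_adj⟩ := hsh {w₁} (by simp)
  have hvw₂ := (hv_adj w₁ (by simp)).1 (Finset.mem_singleton_self w₁)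
  rw [hammingAdj_iff_of_mem_axis hv h₁i h₁rev, ← hammingAdj_iff_of_mem_axis hv h₂i h₂rev,
    ← hv_adj w₂ (by simp)] at hvw₂
  exact hne (Finset.mem_singleton.1 hvw₂).symm

lemma card_lt_two_of_shatters {W : Finset (Fin 2 → ZMod q)} (hW : W ⊆ C) (h : Shatters 2 C W) :
    W.card < 2 := by
  by_contra! hcard
  obtain ⟨w₁, h₁, w₂, h₂, hne⟩ := Finset.one_lt_card.1 hcard
  exact not_shatters_pair (hW h₁) (hW h₂) hne <|
    h.mono (Finset.insert_subset h₁ (Finset.singleton_subset_iff.2 h₂))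

end

/-- for every `q ≥ 3` there is `U ⊆ V(H(2,q,2))` with `|U| = 2q - 1`
whose VC-dimension is strictly less than 2; one such set is the set of vertices with at
least one coordinate equal to 0. -/
theorem exists_vc_dim_lt_two_H2q2 (q : ℕ) (hq : 3 ≤ q) :
    ∃ U : Finset (Fin 2 → ZMod q),
      U.card = 2 * q - 1 ∧
      (∀ W ⊆ U, Shatters 2 U W → W.card < 2) ∧
      (∀ x : Fin 2 → ZMod q, x ∈ U ↔ x 0 = 0 ∨ x 1 = 0) := by
  obtain ⟨n, rfl⟩ : ∃ n, q = n + 1 := ⟨q - 1, by omega⟩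
  refine ⟨coordHyperplanes 2 (n + 1), ?_, fun W hW => card_lt_two_of_shatters hW,
    fun x => by rw [mem_coordHyperplanes, Fin.exists_fin_two]⟩
  rw [card_coordHyperplanes, Nat.add_sub_cancel, show 2 * (n + 1) - 1 = 2 * n + 1 by omega]
  exact Nat.sub_eq_of_eq_add (by ring)
end

section
/- Let q ≥ 3 be a natural number and let U be a subset of the vertices of the Hamming graph H(2,q,2). Suppose there exist elements a, b, c, r, s, t, w of Z_q with a ≠ b, s ≠ r, t ≠ r, c ∉ {a, b}, and w ≠ r, such that the vertices (a, r), (b, r), (a, s), (b, t), and (c, w) all belong to U. Then the VC-dimension of (U, n(U)) is at least 2. -/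
lemma hammingAdj_two_iff {q : ℕ} (x y : Fin 2 → ZMod q) :
    hammingAdj 2 x y ↔ x 0 ≠ y 0 ∧ x 1 ≠ y 1 := by
  calc hammingAdj 2 x y
      ↔ (Finset.univ.filter fun i => x i ≠ y i).card = (Finset.univ : Finset (Fin 2)).card := by
        rw [hammingAdj, Finset.card_fin]
    _ ↔ x 0 ≠ y 0 ∧ x 1 ≠ y 1 := by
        simp only [Finset.card_filter_eq_iff, Finset.mem_univ, true_imp_iff, Fin.forall_fin_two]

lemma hammingAdj_vec_two_iff {q : ℕ} (x₀ x₁ y₀ y₁ : ZMod q) :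
    hammingAdj 2 ![x₀, x₁] ![y₀, y₁] ↔ x₀ ≠ y₀ ∧ x₁ ≠ y₁ := by
  simp [hammingAdj_two_iff]

lemma shatters_pair {d q t : ℕ} {U : Finset (Fin d → ZMod q)} {x y : Fin d → ZMod q}
    (h : ∀ px py : Prop, ∃ u ∈ U, (hammingAdj t u x ↔ px) ∧ (hammingAdj t u y ↔ py)) :
    Shatters t U {x, y} := by
  intro S _
  obtain ⟨u, hu, hx, hy⟩ := h (x ∈ S) (y ∈ S)
  refine ⟨u, hu, fun v hv => ?_⟩
  rcases Finset.mem_insert.1 hv with rfl | hv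
  · exact hx.symm
  · rw [Finset.mem_singleton.1 hv]
    exact hy.symm

theorem vc_dim_ge_two_of_row_pluck_general (q : ℕ)
    (U : Finset (Fin 2 → ZMod q))
    (a b c r s t w : ZMod q)
    (hab : a ≠ b) (hsr : s ≠ r) (htr : t ≠ r)
    (hca : c ≠ a) (hcb : c ≠ b) (hwr : w ≠ r)
    (h₁ : ![a, r] ∈ U) (h₂ : ![b, r] ∈ U) (h₃ : ![a, s] ∈ U)
    (h₄ : ![b, t] ∈ U) (h₅ : ![c, w] ∈ U) :
    ∃ W ⊆ U, W.card = 2 ∧ Shatters 2 U W := by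
  have hne : (![a, r] : Fin 2 → ZMod q) ≠ ![b, r] := fun h => hab (congrFun h 0)
  refine ⟨{![a, r], ![b, r]}, Finset.insert_subset h₁ (Finset.singleton_subset_iff.2 h₂),
    Finset.card_pair hne, shatters_pair fun px py => ?_⟩
  by_cases hpx : px <;> by_cases hpy : py
  · exact ⟨_, h₅, by simp [hammingAdj_vec_two_iff, hpx, hpy, hca, hcb, hwr]⟩
  · exact ⟨_, h₄, by simp [hammingAdj_vec_two_iff, hpx, hpy, hab.symm, htr]⟩
  · exact ⟨_, h₃, by simp [hammingAdj_vec_two_iff, hpx, hpy, hab, hsr]⟩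
  · exact ⟨_, h₁, by simp [hammingAdj_vec_two_iff, hpx, hpy]⟩

/-- a row-pluck configuration together with an unrelated point in
`U ⊆ V(H(2,q,2))` (with `q ≥ 3`) forces the VC-dimension of `(U, n(U))` to be
at least 2. -/
theorem vc_dim_ge_two_of_row_pluck (q : ℕ) (hq : 3 ≤ q)
    (U : Finset (Fin 2 → ZMod q))
    (a b c r s t w : ZMod q)
    (hab : a ≠ b) (hsr : s ≠ r) (htr : t ≠ r)
    (hca : c ≠ a) (hcb : c ≠ b) (hwr : w ≠ r)
    (h₁ : ![a, r] ∈ U) (h₂ : ![b, r] ∈ U) (h₃ : ![a, s] ∈ U)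
    (h₄ : ![b, t] ∈ U) (h₅ : ![c, w] ∈ U) :
    ∃ W ⊆ U, W.card = 2 ∧ Shatters 2 U W :=
  vc_dim_ge_two_of_row_pluck_general q U a b c r s t w hab hsr htr hca hcb hwr h₁ h₂ h₃ h₄ h₅
end
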